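/- Let n ≥ 1 and let (X_k)_{0 ≤ k ≤ n} be the lazy simple random walk on ℤ started at 0 (steps +1 with probability 1/4, −1 with probability 1/4, and 0 with probability 1/2, independently). Then for every natural number r, the probability that the set {j : 1 ≤ j ≤ n, X_j = 0 and X_i ≥ 0 for all 0 ≤ i < j} has at least r elements is at most (3/4)^r. -/

import Mathlib

/-!
Call `j` a nonnegative return if `X_j = 0` and `X_i ≥ 0` for `i < j`; time `0` is one. Let `t` be
the `r`-th nonnegative return after time `0`. If there is an `(r+1)`-st one, then `X_t = 0` and
`X_{t+1} ≥ 0`, so the step taken at time `t` is not `−1`. Since `t` is a stopping time, that step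
is uniform on `Fin 4` and independent of the event that `t` exists, so each further return costs a
factor `3/4`.
-/

/-- The step of the lazy simple random walk: `+1`, `−1`, `0`, `0`. -/
def lazyStep : Fin 4 → ℤ := ![1, -1, 0, 0]

/-- The lazy simple random walk after `k` steps, driven by `ω : Fin n → Fin 4`:
`X_k(ω) = ∑_{i < k} lazyStep (ω i)`. -/
def lazyWalk (n : ℕ) (ω : Fin n → Fin 4) (k : ℕ) : ℤ :=
  ∑ i ∈ Finset.univ.filter (fun i : Fin n => (i : ℕ) < k), lazyStep (ω i)

open Finset Function

section StoppingTime

variable {ι α : Type*} [Fintype ι] [DecidableEq ι] [Fintype α] [DecidableEq α]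

theorem card_filter_apply_mem_mul_card (t : ι) (Q : (ι → α) → Prop) [DecidablePred Q]
    (hQ : ∀ ω a, Q (update ω t a) ↔ Q ω) (S : Finset α) :
    #{ω | Q ω ∧ ω t ∈ S} * Fintype.card α = #{ω | Q ω} * #S := by
  rw [← card_univ, ← card_product, ← card_product]
  let swap : (ι → α) × α → (ι → α) × α := fun p => (update p.1 t p.2, p.1 t)
  have swap_swap : ∀ p, swap (swap p) = p := fun p => by simp [swap]
  refine card_nbij' swap swap ?_ ?_ (fun p _ => swap_swap p) (fun p _ => swap_swap p) <;>
    rintro ⟨ω, a⟩ h <;> simp_all [swap]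

theorem card_filter_exists_apply_mem_mul_card (τ : (ι → α) → ι → Prop)
    [∀ ω, DecidablePred (τ ω)] (hτ : ∀ ω t a, τ (update ω t a) t ↔ τ ω t)
    (hunique : ∀ ω t t', τ ω t → τ ω t' → t = t') (S : Finset α) :
    #{ω | ∃ t, τ ω t ∧ ω t ∈ S} * Fintype.card α = #{ω | ∃ t, τ ω t} * #S := by
  have hfiber : ∀ P : (ι → α) → ι → Prop, (∀ ω t, P ω t → τ ω t) →
      ∀ [∀ ω, DecidablePred (P ω)], #{ω | ∃ t, P ω t} = ∑ t, #{ω | P ω t} := by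
    intro P hP _
    rw [← card_biUnion]
    · congr 1
      ext ω
      simp
    · intro t _ t' _ htt'
      simp only [disjoint_left, mem_filter, mem_univ, true_and]
      exact fun ω h h' => htt' (hunique ω t t' (hP ω t h) (hP ω t' h'))
  rw [hfiber (fun ω t => τ ω t ∧ ω t ∈ S) (fun _ _ h => h.1), hfiber τ (fun _ _ h => h),
    sum_mul, sum_mul]
  exact sum_congr rfl fun t _ => card_filter_apply_mem_mul_card t (τ · t) (hτ · t) S

end StoppingTime

section LazyWalk

variable {n : ℕ} {ω : Fin n → Fin 4}

theorem lazyWalk_zero : lazyWalk n ω 0 = 0 := by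
  simp [lazyWalk]

theorem lazyWalk_succ (t : Fin n) : lazyWalk n ω (t + 1) = lazyWalk n ω t + lazyStep (ω t) := by
  have h : ({i | (i : ℕ) < t + 1} : Finset (Fin n))
      = insert t ({i | (i : ℕ) < t} : Finset (Fin n)) := by
    ext i
    simp only [mem_filter, mem_univ, true_and, mem_insert, Fin.ext_iff]
    omega
  rw [lazyWalk, lazyWalk, h, sum_insert (by simp), add_comm]

theorem lazyWalk_update_of_le {t : Fin n} {j : ℕ} (hj : j ≤ t) (a : Fin 4) :
    lazyWalk n (update ω t a) j = lazyWalk n ω j :=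
  sum_congr rfl fun i hi => by rw [update_of_ne (by rintro rfl; simp at hi; omega)]

def IsNonnegReturn (n : ℕ) (ω : Fin n → Fin 4) (j : ℕ) : Prop :=
  lazyWalk n ω j = 0 ∧ ∀ i < j, 0 ≤ lazyWalk n ω i

instance (n : ℕ) (ω : Fin n → Fin 4) : DecidablePred (IsNonnegReturn n ω) :=
  fun _ => inferInstanceAs (Decidable (_ ∧ _))

theorem isNonnegReturn_zero : IsNonnegReturn n ω 0 :=
  ⟨lazyWalk_zero, fun _ h => absurd h (Nat.not_lt_zero _)⟩

theorem isNonnegReturn_update_iff {t : Fin n} {j : ℕ} (hj : j ≤ t) (a : Fin 4) :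
    IsNonnegReturn n (update ω t a) j ↔ IsNonnegReturn n ω j := by
  unfold IsNonnegReturn
  rw [lazyWalk_update_of_le hj]
  exact and_congr_right' <| forall₂_congr fun i hi => by rw [lazyWalk_update_of_le (by omega)]

theorem count_isNonnegReturn_update {t : Fin n} {j : ℕ} (hj : j ≤ t) (a : Fin 4) :
    Nat.count (IsNonnegReturn n (update ω t a)) j = Nat.count (IsNonnegReturn n ω) j := by
  simp only [Nat.count_eq_card_filter_range]
  exact congrArg card <| filter_congr fun i hi =>
    isNonnegReturn_update_iff (by simp at hi; omega) a

theorem card_filter_isNonnegReturn_add_one :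
    #{j ∈ Icc 1 n | IsNonnegReturn n ω j} + 1 = Nat.count (IsNonnegReturn n ω) (n + 1) := by
  have h : range (n + 1) = insert 0 (Icc 1 n) := by
    ext j
    simp only [mem_range, mem_insert, mem_Icc]
    omega
  rw [Nat.count_eq_card_filter_range, h, filter_insert, if_pos isNonnegReturn_zero,
    card_insert_of_notMem (by simp)]

/-- Time `0` is the `0`-th nonnegative return, so here `t` is the `r`-th one after time `0`. -/
def IsNthNonnegReturn (n : ℕ) (ω : Fin n → Fin 4) (r : ℕ) (t : Fin n) : Prop :=
  IsNonnegReturn n ω t ∧ Nat.count (IsNonnegReturn n ω) t = r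

instance (n : ℕ) (ω : Fin n → Fin 4) (r : ℕ) : DecidablePred (IsNthNonnegReturn n ω r) :=
  fun _ => inferInstanceAs (Decidable (_ ∧ _))

theorem isNthNonnegReturn_update_iff {r : ℕ} (t : Fin n) (a : Fin 4) :
    IsNthNonnegReturn n (update ω t a) r t ↔ IsNthNonnegReturn n ω r t := by
  unfold IsNthNonnegReturn
  rw [isNonnegReturn_update_iff le_rfl, count_isNonnegReturn_update le_rfl]

theorem IsNthNonnegReturn.unique {r : ℕ} {t t' : Fin n} (h : IsNthNonnegReturn n ω r t)
    (h' : IsNthNonnegReturn n ω r t') : t = t' :=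
  Fin.ext <| Nat.count_injective h.1 h'.1 (h.2.trans h'.2.symm)

theorem IsNthNonnegReturn.lt_count {r : ℕ} {t : Fin n} (h : IsNthNonnegReturn n ω r t) :
    r < Nat.count (IsNonnegReturn n ω) (n + 1) :=
  calc r < Nat.count (IsNonnegReturn n ω) (t + 1) := by
        rw [Nat.count_succ, if_pos h.1, h.2]; exact Nat.lt_succ_self r
    _ ≤ Nat.count (IsNonnegReturn n ω) (n + 1) := Nat.count_monotone _ (by omega)

theorem exists_isNthNonnegReturn_of_succ_lt_count {r : ℕ}
    (h : r + 1 < Nat.count (IsNonnegReturn n ω) (n + 1)) :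
    ∃ t : Fin n, IsNthNonnegReturn n ω r t ∧ 0 ≤ lazyStep (ω t) := by
  have hcard : ∀ k ≤ r + 1, ∀ hf : (Set.ofPred (IsNonnegReturn n ω)).Finite, k < #hf.toFinset :=
    fun k hk hf => (by omega : k < Nat.count (IsNonnegReturn n ω) (n + 1)).trans_le
      (Nat.count_le_card hf _)
  set t := Nat.nth (IsNonnegReturn n ω) r
  set u := Nat.nth (IsNonnegReturn n ω) (r + 1)
  have htu : t < u := Nat.nth_lt_nth' (Nat.lt_succ_self r) (hcard _ le_rfl)
  have hun : u < n + 1 := Nat.nth_lt_of_lt_count h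
  have ht : IsNonnegReturn n ω t := Nat.nth_mem r (hcard _ (Nat.le_succ r))
  have hu : IsNonnegReturn n ω u := Nat.nth_mem (r + 1) (hcard _ le_rfl)
  refine ⟨⟨t, by omega⟩, ⟨ht, Nat.count_nth (hcard _ (Nat.le_succ r))⟩, ?_⟩
  have hnext : 0 ≤ lazyWalk n ω (t + 1) := by
    rcases (Nat.succ_le_of_lt htu).eq_or_lt with heq | hlt
    · rw [show t + 1 = u from heq, hu.1]
    · exact hu.2 _ hlt
  rwa [lazyWalk_succ ⟨t, by omega⟩, ht.1, zero_add] at hnext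

theorem card_succ_lt_count_mul_four_le (r : ℕ) :
    #{ω : Fin n → Fin 4 | r + 1 < Nat.count (IsNonnegReturn n ω) (n + 1)} * 4
      ≤ #{ω : Fin n → Fin 4 | r < Nat.count (IsNonnegReturn n ω) (n + 1)} * 3 := by
  set S : Finset (Fin 4) := {a | 0 ≤ lazyStep a}
  have hS : #S = 3 := by decide
  have hstep : ({ω | r + 1 < Nat.count (IsNonnegReturn n ω) (n + 1)} : Finset (Fin n → Fin 4))
      ⊆ ({ω | ∃ t, IsNthNonnegReturn n ω r t ∧ ω t ∈ S} : Finset _) := by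
    intro ω hω
    simpa [S] using exists_isNthNonnegReturn_of_succ_lt_count (mem_filter.1 hω).2
  have hexists : ({ω | ∃ t, IsNthNonnegReturn n ω r t} : Finset (Fin n → Fin 4))
      ⊆ ({ω | r < Nat.count (IsNonnegReturn n ω) (n + 1)} : Finset _) := by
    intro ω hω
    obtain ⟨t, ht⟩ := (mem_filter.1 hω).2
    exact mem_filter.2 ⟨mem_univ ω, ht.lt_count⟩
  have hstopped := card_filter_exists_apply_mem_mul_card (fun ω => IsNthNonnegReturn n ω r)
    (fun _ => isNthNonnegReturn_update_iff) (fun _ _ _ => IsNthNonnegReturn.unique) S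
  rw [Fintype.card_fin, hS] at hstopped
  calc _ ≤ _ * 4 := Nat.mul_le_mul_right 4 (card_le_card hstep)
    -- the two sides elaborate `∃ t : Fin n` with different `Decidable` instances
    _ = _ := by convert hstopped using 4
    _ ≤ _ := Nat.mul_le_mul_right 3 (card_le_card hexists)

theorem card_lt_count_isNonnegReturn_le (r : ℕ) :
    (#{ω : Fin n → Fin 4 | r < Nat.count (IsNonnegReturn n ω) (n + 1)} : ℝ)
      ≤ 4 ^ n * (3 / 4) ^ r := by
  induction r with
  | zero =>
    calc _ ≤ (#(univ : Finset (Fin n → Fin 4)) : ℝ) := by exact_mod_cast card_filter_le _ _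
      _ = 4 ^ n * (3 / 4) ^ 0 := by simp
  | succ r ih =>
    have h := (Nat.cast_le (α := ℝ)).2 (card_succ_lt_count_mul_four_le (n := n) r)
    push_cast at h
    rw [pow_succ, ← mul_assoc]
    linarith

end LazyWalk

theorem returns_with_nonneg_history_tail_general (n : ℕ) (r : ℕ) :
    ((Finset.univ.filter (fun ω : Fin n → Fin 4 =>
        r ≤ ((Finset.Icc 1 n).filter (fun j =>
          lazyWalk n ω j = 0 ∧ ∀ i < j, 0 ≤ lazyWalk n ω i)).card)).card : ℝ)
        / 4 ^ n
      ≤ (3 / 4 : ℝ) ^ r := by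
  have hevent : ∀ ω : Fin n → Fin 4,
      r ≤ #{j ∈ Icc 1 n | IsNonnegReturn n ω j} ↔ r < Nat.count (IsNonnegReturn n ω) (n + 1) :=
    fun ω => by rw [← card_filter_isNonnegReturn_add_one]; omega
  rw [div_le_iff₀' (by positivity)]
  refine le_of_eq_of_le ?_ (card_lt_count_isNonnegReturn_le r)
  congr 2
  exact filter_congr fun ω _ => hevent ω

/-- For the lazy simple random walk on `ℤ` started at `0` (uniform measure on
`(Fin 4)ⁿ`), the probability that the set
`{j : 1 ≤ j ≤ n, X_j = 0 and X_i ≥ 0 for all 0 ≤ i < j}` has at least `r`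
elements is at most `(3/4)^r`. -/
theorem returns_with_nonneg_history_tail (n : ℕ) (hn : 1 ≤ n) (r : ℕ) :
    ((Finset.univ.filter (fun ω : Fin n → Fin 4 =>
        r ≤ ((Finset.Icc 1 n).filter (fun j =>
          lazyWalk n ω j = 0 ∧ ∀ i < j, 0 ≤ lazyWalk n ω i)).card)).card : ℝ)
        / 4 ^ n
      ≤ (3 / 4 : ℝ) ^ r :=
  returns_with_nonneg_history_tail_general n r
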